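/- arXiv:2402.01367 — 3 statements merged into one kernel-verified Lean document; each statement's English description precedes it below -/
import Mathlib

section
/- Let δ > 1 be an algebraic integer, q a positive integer, and suppose that for some s, n ∈ ℕ with s ≥ 1 and integers polynomials h_k of degree ≤ D−1 we have (1/(q·Δⁿ))·(δ^s − 1) = (1/q)·F(δ) for some F ∈ ℤ[X], where Δ := |Norm(δ)| ≥ 2. Then δ is a root of the integer polynomial X^s − Δⁿ·F(X) − 1, whose constant term is ≡ −1 (mod Δ); since Norm(δ) divides the constant term of any integer polynomial vanishing at δ, this forces Δ | 1, a contradiction. Hence if x = 1/(q·Δⁿ) has a purely periodic expansion x(δ^s−1) = (1/q)F(δ) with F ∈ ℤ[X], then |Norm(δ)| = 1, i.e., δ is an algebraic unit. -/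
set_option maxHeartbeats 1000000


/-- Let `δ > 1` be an algebraic integer and
`Δ = |Norm(δ)|` (the absolute value of the constant coefficient of its minimal
polynomial). If `x = 1/(q·Δⁿ)` (with `q ≥ 1`, `n ≥ 1`) has a purely periodic
expansion, i.e. `x·(δ^s − 1) = (1/q)·F(δ)` for some `F ∈ ℤ[X]` with
`deg F ≤ s − 2`, then `Δ = 1`, i.e. `δ` is an algebraic unit. -/
theorem stmt_15 (δ : ℝ) (hδ : 1 < δ) (hint : IsIntegral ℤ δ)
    (Δ : ℕ) (hΔ : Δ = ((minpoly ℤ δ).coeff 0).natAbs)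
    (q n s : ℕ) (hq : 1 ≤ q) (hn : 1 ≤ n) (hs : 1 ≤ s)
    (F : Polynomial ℤ) (hF : F.natDegree ≤ s - 2)
    (heq : (1 / ((q : ℝ) * (Δ : ℝ) ^ n)) * (δ ^ s - 1) =
      (1 / (q : ℝ)) * (Polynomial.aeval δ F : ℝ)) :
    Δ = 1 := by
  set c : ℤ := (minpoly ℤ δ).coeff 0 with hc
  have hδ0 : δ ≠ 0 := by positivity
  have hc0 : c ≠ 0 := by
    intro h0
    have hX : (Polynomial.X : Polynomial ℤ) ∣ minpoly ℤ δ :=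
      Polynomial.X_dvd_iff.mpr h0
    obtain ⟨k, hk⟩ := hX
    have hirr := minpoly.irreducible hint
    rcases hirr.isUnit_or_isUnit hk with h | h
    · exact Polynomial.not_isUnit_X h
    · obtain ⟨r, hr, hrk⟩ := Polynomial.isUnit_iff.mp h
      have hmin := minpoly.aeval ℤ δ
      rw [hk, ← hrk] at hmin
      simp only [map_mul, Polynomial.aeval_X, Polynomial.aeval_C] at hmin
      rcases Int.isUnit_iff.mp hr with rfl | rfl <;> simp at hmin <;>
        exact hδ0 hmin
  have hΔ0 : (Δ : ℝ) ≠ 0 := by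
    simp [hΔ]
    exact_mod_cast hc0
  have hq0 : (q : ℝ) ≠ 0 := by positivity
  -- clear denominators
  have heq' : δ ^ s - 1 = (Δ : ℝ) ^ n * (Polynomial.aeval δ F : ℝ) := by
    field_simp at heq
    apply mul_right_cancel₀ hq0
    rw [heq]
  -- δ is a root of G
  set G : Polynomial ℤ :=
    Polynomial.X ^ s - Polynomial.C ((Δ : ℤ) ^ n) * F - 1 with hG
  have hroot : Polynomial.aeval δ G = 0 := by
    simp only [hG, map_sub, map_mul, map_pow, map_one, Polynomial.aeval_X,
      Polynomial.aeval_C]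
    push_cast
    linarith
  have hdvd : minpoly ℤ δ ∣ G := minpoly.isIntegrallyClosed_dvd hint hroot
  obtain ⟨k, hk⟩ := hdvd
  have hcoeff : G.coeff 0 = c * k.coeff 0 := by
    rw [hk, Polynomial.mul_coeff_zero]
  have hG0 : G.coeff 0 = -((Δ : ℤ) ^ n * F.coeff 0) - 1 := by
    rw [hG]
    simp only [Polynomial.coeff_sub, Polynomial.coeff_one, Polynomial.coeff_X_pow,
      Polynomial.coeff_C_mul]
    rw [if_neg (by omega)]
    norm_num
  have hcΔ : c ∣ (Δ : ℤ) ^ n * F.coeff 0 := by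
    have h1 : c ∣ (Δ : ℤ) := by
      rw [hΔ]
      exact Int.dvd_natAbs.mpr dvd_rfl
    exact dvd_mul_of_dvd_left (dvd_pow h1 (by omega)) _
  have hc1 : c ∣ 1 := by
    have h2 : c ∣ G.coeff 0 := ⟨k.coeff 0, hcoeff⟩
    rw [hG0] at h2
    have h3 := dvd_add h2 hcΔ
    have h4 : c ∣ (-1 : ℤ) := by
      have e : -((Δ : ℤ) ^ n * F.coeff 0) - 1 + (Δ : ℤ) ^ n * F.coeff 0 = -1 := by ring
      rwa [e] at h3
    simpa using h4
  have : c.natAbs = 1 := Int.isUnit_iff_natAbs_eq.mp (isUnit_of_dvd_one hc1)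
  omega
end

section
/- Let δ > 1 be a Pisot or Salem number, ψ : ℚ(δ) → ℂ a non-identical embedding with η := ψ(δ) ∈ (0,1) real positive, and suppose all digits d_k lie in a set 𝒟 ⊂ ℚ(δ) with ψ(d) ≥ 0 for all d ∈ 𝒟. If x > 0 and x(δ^s − 1) = Σ_{k=D+1}^s d_k δ^{s−k} for some s > D ≥ 1, then applying ψ yields (η^s − 1)x = Σ_{k=D+1}^s ψ(d_k) η^{s−k}, where the left-hand side is negative and the right-hand side is nonnegative — a contradiction. Hence no such purely periodic expansion of a positive rational x exists when some non-identical embedding maps all digits to nonnegative reals with ψ(δ) ∈ (0,1). -/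
/-- The element `δ` of `ℚ(δ)`. -/
noncomputable def deltaElem (δ : ℝ) : ↥(IntermediateField.adjoin ℚ {δ}) :=
  ⟨δ, IntermediateField.mem_adjoin_simple_self ℚ δ⟩

/- Under `ComplexOrder`, `0 ≤ z` means that `z` is a nonnegative real, so the sign argument
can be run directly on the image of the expansion in `ℂ`. -/
open scoped ComplexOrder

theorem mul_pow_sub_one_ne_sum_mul_pow {R : Type*} [CommRing R] [PartialOrder R]
    [IsStrictOrderedRing R] {x η : R} (hx : 0 < x) (hη0 : 0 ≤ η) (hη1 : η < 1) {s : ℕ}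
    (hs : s ≠ 0) {S : Finset ℕ} {c : ℕ → R} (hc : ∀ k ∈ S, 0 ≤ c k) :
    x * (η ^ s - 1) ≠ ∑ k ∈ S, c k * η ^ (s - k) := by
  have hlhs : x * (η ^ s - 1) < 0 :=
    mul_neg_of_pos_of_neg hx (sub_neg.mpr (pow_lt_one₀ hη0 hη1 hs))
  have hrhs : 0 ≤ ∑ k ∈ S, c k * η ^ (s - k) :=
    Finset.sum_nonneg fun k hk => mul_nonneg (hc k hk) (pow_nonneg hη0 _)
  exact (hlhs.trans_le hrhs).ne

theorem stmt_16_general (δ : ℝ)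
    (ψ : ↥(IntermediateField.adjoin ℚ {δ}) →ₐ[ℚ] ℂ)
    (η : ℝ) (hψδ : ψ (deltaElem δ) = (η : ℂ)) (hη0 : 0 < η) (hη1 : η < 1)
    (D s : ℕ) (hs : D < s)
    (d : ℕ → ↥(IntermediateField.adjoin ℚ {δ}))
    (hψd : ∀ k ∈ Finset.Icc (D + 1) s, ∃ t : ℝ, 0 ≤ t ∧ ψ (d k) = (t : ℂ))
    (x : ℚ) (hx : 0 < x)
    (heq : (algebraMap ℚ _ x) * ((deltaElem δ) ^ s - 1) =
      ∑ k ∈ Finset.Icc (D + 1) s, d k * (deltaElem δ) ^ (s - k)) :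
    False := by
  have hψheq := congrArg ψ heq
  simp only [map_mul, map_sub, map_pow, map_one, map_sum, hψδ, eq_ratCast, map_ratCast] at hψheq
  refine mul_pow_sub_one_ne_sum_mul_pow ?_ ?_ ?_ (by omega) ?_ hψheq
  · rw [← Complex.ofReal_ratCast]
    exact_mod_cast hx
  · exact_mod_cast hη0.le
  · exact_mod_cast hη1
  · intro k hk
    obtain ⟨t, ht0, hψt⟩ := hψd k hk
    rw [hψt]
    exact_mod_cast ht0

/-- Let `δ > 1` (Pisot or Salem), `ψ : ℚ(δ) → ℂ` a non-identical
embedding with `η = ψ(δ) ∈ (0,1)` real positive, and digits `d_k` with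
`ψ(d_k)` real nonnegative. Then a positive rational `x` cannot satisfy the
purely periodic expansion equation `x(δ^s − 1) = Σ_{k=D+1}^s d_k δ^{s−k}`,
since applying `ψ` makes the left-hand side negative and the right-hand side
nonnegative. -/
theorem stmt_16 (δ : ℝ) (hδ : 1 < δ) (hint : IsIntegral ℤ δ)
    (ψ : ↥(IntermediateField.adjoin ℚ {δ}) →ₐ[ℚ] ℂ)
    (η : ℝ) (hψδ : ψ (deltaElem δ) = (η : ℂ)) (hη0 : 0 < η) (hη1 : η < 1)
    (hnonid : (η : ℂ) ≠ (δ : ℂ))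
    (D s : ℕ) (hD : 1 ≤ D) (hs : D < s)
    (d : ℕ → ↥(IntermediateField.adjoin ℚ {δ}))
    (hψd : ∀ k ∈ Finset.Icc (D + 1) s, ∃ t : ℝ, 0 ≤ t ∧ ψ (d k) = (t : ℂ))
    (x : ℚ) (hx : 0 < x)
    (heq : (algebraMap ℚ _ x) * ((deltaElem δ) ^ s - 1) =
      ∑ k ∈ Finset.Icc (D + 1) s, d k * (deltaElem δ) ^ (s - k)) :
    False :=
  stmt_16_general δ ψ η hψδ hη0 hη1 D s hs d hψd x hx heq
end

section
/- Let m = 2k+1 ≥ 1 be odd, δ > 1 the root of x² − (m+1)x − 1, β₂ = δ − 1, β₁ = δ/(δ−1). Then 1/2 = k/β₂ + (k+1)/β₂ · Σ_{j=1}^∞ δ^{−j}, i.e., the expansion of 1/2 in the alternate base (β₂, β₁) is k(0(k+1))^ω; equivalently, the algebraic identity (1/2)·β₂·(δ − 1) = k(δ − 1) + (k+1) holds in ℚ(δ). -/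
/-- Let `m = 2k+1` be odd, `δ > 1` the root of `x² − (m+1)x − 1`,
`β₂ = δ − 1`, `β₁ = δ/(δ−1)`. Then
`1/2 = k/β₂ + ((k+1)/β₂)·Σ_{j≥1} δ^{−j}`, i.e. the expansion of `1/2` in the
alternate base `(β₂, β₁)` is `k(0(k+1))^ω`; equivalently
`(1/2)·β₂·(δ − 1) = k(δ − 1) + (k+1)` holds in `ℚ(δ)`. -/
theorem stmt_19 (k : ℕ) (m : ℕ) (hmk : m = 2 * k + 1)
    (δ : ℝ) (hδ : 1 < δ) (hroot : δ ^ 2 = ((m : ℝ) + 1) * δ + 1)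
    (β₁ β₂ : ℝ) (hβ₂ : β₂ = δ - 1) (hβ₁ : β₁ = δ / (δ - 1)) :
    (1 / 2 : ℝ) = (k : ℝ) / β₂ + ((k : ℝ) + 1) / β₂ * ∑' j : ℕ, (1 / δ) ^ (j + 1) ∧
    (1 / 2 : ℝ) * β₂ * (δ - 1) = (k : ℝ) * (δ - 1) + ((k : ℝ) + 1) := by
  have hδ0 : (0:ℝ) < δ := lt_trans one_pos hδ
  have hδ1 : δ - 1 ≠ 0 := by linarith
  have hr0 : (0:ℝ) ≤ 1/δ := by positivity
  have hr1 : (1/δ : ℝ) < 1 := by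
    rw [div_lt_one hδ0]; exact hδ
  have hsum : ∑' j : ℕ, (1 / δ) ^ (j + 1) = 1 / (δ - 1) := by
    have := tsum_geometric_of_lt_one hr0 hr1
    calc ∑' j : ℕ, (1 / δ) ^ (j + 1) = ∑' j : ℕ, (1/δ) * (1/δ)^j := by
          congr 1; funext j; ring
      _ = (1/δ) * ∑' j : ℕ, (1/δ)^j := tsum_mul_left
      _ = (1/δ) * (1 - 1/δ)⁻¹ := by rw [this]
      _ = 1 / (δ - 1) := by
          field_simp
  have hm : (m : ℝ) = 2 * k + 1 := by exact_mod_cast congrArg Nat.cast hmk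
  have key : (δ - 1)^2 = 2 * k * δ + 2 := by nlinarith [hroot]
  constructor
  · rw [hsum, hβ₂]
    field_simp
    nlinarith [key]
  · rw [hβ₂]; nlinarith [key]
end
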